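/- arXiv:1911.05710 — 4 statements merged into one kernel-verified Lean document; each statement's English description precedes it below -/
import Mathlib

section
/- Let ν > 1 be a real number and r an integer, and let ψ be a minimal (≥ν,<r)-tangle. Then ord(ψ) ≥ 1. -/
open scoped Classical

structure Multigraph : Type 1 where
  V : Type
  E : Type
  fintypeV : Fintype V
  fintypeE : Fintype E
  head : E → V
  tail : E → V
  inv : E → E
  inv_inv : ∀ e, inv (inv e) = e
  tail_inv : ∀ e, tail (inv e) = head e

attribute [instance] Multigraph.fintypeV Multigraph.fintypeE

namespace Multigraph

noncomputable instance (G : Multigraph) : DecidableEq G.V := Classical.decEq _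
noncomputable instance (G : Multigraph) : DecidableEq G.E := Classical.decEq _

/-- The relation identifying a directed edge with its reversal; undirected
edges are the orbits of the involution, i.e. the classes of (the equivalence
closure of) this relation. -/
def edgeRel (G : Multigraph) (e f : G.E) : Prop := f = e ∨ f = G.inv e

/-- The number of undirected edges, `#E_G`. -/
noncomputable def edgeCard (G : Multigraph) : ℕ := Nat.card (Quot G.edgeRel)

/-- The order `ord(G) = #E_G - #V_G`. -/
noncomputable def ord (G : Multigraph) : ℤ :=
  (G.edgeCard : ℤ) - (Nat.card G.V : ℤ)

/-- The Euler characteristic `χ(G) = #V_G - #Edir_G / 2`. -/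
noncomputable def eulerChar (G : Multigraph) : ℚ :=
  (Nat.card G.V : ℚ) - (Nat.card G.E : ℚ) / 2

/-- The Hashimoto (non-backtracking) matrix. -/
noncomputable def hashimoto (G : Multigraph) : Matrix G.E G.E ℂ :=
  fun e f => if G.head e = G.tail f ∧ G.inv e ≠ f then 1 else 0

/-- `μ₁(G)`: the spectral radius of the Hashimoto matrix. -/
noncomputable def mu1 (G : Multigraph) : ℝ :=
  sSup {x : ℝ | ∃ z ∈ spectrum ℂ G.hashimoto, x = ‖z‖}

def Adj (G : Multigraph) (v w : G.V) : Prop :=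
  ∃ e : G.E, G.tail e = v ∧ G.head e = w

/-- `G` is connected: nonempty, and any two vertices are joined by a walk. -/
def Connected (G : Multigraph) : Prop :=
  Nonempty G.V ∧ ∀ v w : G.V, Relation.ReflTransGen G.Adj v w

/-- The degree of a vertex: the number of directed edges with head `v`. -/
noncomputable def degree (G : Multigraph) (v : G.V) : ℕ :=
  Nat.card {e : G.E // G.head e = v}

/-- A graph is pruned if every vertex has degree at least 2. -/
def Pruned (G : Multigraph) : Prop := ∀ v : G.V, 2 ≤ G.degree v

/-- A subgraph: subsets of vertices and directed edges, closed under the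
involution and containing the endpoints of its directed edges. -/
structure Subgraph (G : Multigraph) where
  verts : Set G.V
  edges : Set G.E
  inv_mem : ∀ e ∈ edges, G.inv e ∈ edges
  head_mem : ∀ e ∈ edges, G.head e ∈ verts
  tail_mem : ∀ e ∈ edges, G.tail e ∈ verts

/-- The multigraph underlying a subgraph. -/
noncomputable def Subgraph.graph {G : Multigraph} (S : G.Subgraph) : Multigraph where
  V := {v : G.V // v ∈ S.verts}
  E := {e : G.E // e ∈ S.edges}
  fintypeV := Fintype.ofFinite _
  fintypeE := Fintype.ofFinite _
  head := fun e => ⟨G.head e.1, S.head_mem e.1 e.2⟩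
  tail := fun e => ⟨G.tail e.1, S.tail_mem e.1 e.2⟩
  inv := fun e => ⟨G.inv e.1, S.inv_mem e.1 e.2⟩
  inv_inv := fun e => Subtype.ext (G.inv_inv e.1)
  tail_inv := fun e => Subtype.ext (G.tail_inv e.1)

/-- A subgraph is proper if it is not the whole graph. -/
def Subgraph.Proper {G : Multigraph} (S : G.Subgraph) : Prop :=
  S.verts ≠ Set.univ ∨ S.edges ≠ Set.univ

/-- Isomorphism of multigraphs. -/
structure Iso (G H : Multigraph) where
  vEquiv : G.V ≃ H.V
  eEquiv : G.E ≃ H.E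
  map_head : ∀ e, H.head (eEquiv e) = vEquiv (G.head e)
  map_tail : ∀ e, H.tail (eEquiv e) = vEquiv (G.tail e)
  map_inv : ∀ e, H.inv (eEquiv e) = eEquiv (G.inv e)

end Multigraph

/-- A `(≥ν,<r)`-tangle: a connected graph `ψ` with `μ₁(ψ) ≥ ν` and `ord(ψ) < r`. -/
def IsTangle (ν : ℝ) (r : ℤ) (ψ : Multigraph) : Prop :=
  ψ.Connected ∧ ν ≤ ψ.mu1 ∧ ψ.ord < r

/-- A minimal `(≥ν,<r)`-tangle: no proper subgraph is a `(≥ν,<r)`-tangle. -/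
def IsMinimalTangle (ν : ℝ) (r : ℤ) (ψ : Multigraph) : Prop :=
  IsTangle ν r ψ ∧ ∀ S : ψ.Subgraph, S.Proper → ¬ IsTangle ν r S.graph

/-!
Suppose `ord ψ ≤ 0`. The degrees of `ψ` sum to `#Edir ≤ 2 #E ≤ 2 #V`, so either every degree is
at most two, or some vertex `v` has degree at most one. In the first case every row of the
Hashimoto matrix has at most one nonzero entry, whence `μ₁(ψ) ≤ 1 < ν`. In the second case, if
every edge leaving `v` returns to `v`, connectivity makes `v` the only vertex and we are back in
the first case; otherwise `v` is a leaf. Deleting a leaf keeps the graph connected and its order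
unchanged, and does not lower `μ₁`: the row of the leaf edge and the column of its reverse vanish,
so every nonzero eigenvalue of the Hashimoto matrix survives. This contradicts minimality.
-/

attribute [local instance] Matrix.linftyOpNormedRing Matrix.linftyOpNormedAlgebra

open Finset

theorem Nat.card_subtype_ne_add_one {α : Type*} [Finite α] (x : α) :
    Nat.card {y // y ≠ x} + 1 = Nat.card α := by
  have := Fintype.ofFinite α
  rw [Nat.card_eq_fintype_card, Nat.card_eq_fintype_card, Fintype.card_subtype_compl,
    Fintype.card_subtype_eq]
  have : 0 < Fintype.card α := Fintype.card_pos_iff.mpr ⟨x⟩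
  omega

namespace Matrix

variable {n K : Type*} [Fintype n] [DecidableEq n] [Field K]

theorem mem_spectrum_iff_exists_mulVec_eq_smul {A : Matrix n n K} {z : K} :
    z ∈ spectrum K A ↔ ∃ u ≠ 0, A *ᵥ u = z • u := by
  rw [← Matrix.spectrum_toLin', ← Module.End.hasEigenvalue_iff_mem_spectrum]
  simp [Module.End.hasEigenvalue_iff, Submodule.ne_bot_iff, and_comm]

/-- An eigenvector for `z ≠ 0` vanishes on every index with a zero row, and the entries on
indices with a zero column do not enter `A *ᵥ u`; so its restriction along `ι` is an
eigenvector of the submatrix. -/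
theorem mem_spectrum_submatrix_of_ne_zero {m : Type*} [Fintype m] [DecidableEq m]
    {A : Matrix n n K} {ι : m → n} (hι : Function.Injective ι)
    (hA : ∀ i ∉ Set.range ι, (∀ j, A i j = 0) ∨ ∀ j, A j i = 0) {z : K}
    (hz : z ∈ spectrum K A) (hz0 : z ≠ 0) : z ∈ spectrum K (A.submatrix ι ι) := by
  obtain ⟨u, hu0, hAu⟩ := mem_spectrum_iff_exists_mulVec_eq_smul.mp hz
  have hAu_apply (i : n) : ∑ j, A i j * u j = z * u i := by
    simpa [mulVec, dotProduct] using congrFun hAu i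
  have houtside (i j : n) (hj : j ∉ Set.range ι) : A i j * u j = 0 := by
    rcases hA j hj with hrow | hcol
    · have : z * u j = 0 := by simp [← hAu_apply, hrow]
      simp [(mul_eq_zero.mp this).resolve_left hz0]
    · simp [hcol]
  have hrestrict (i : n) : ∑ j, A i (ι j) * u (ι j) = z * u i := by
    rw [← hAu_apply]
    exact Fintype.sum_of_injective ι hι _ _ (houtside i) fun _ => rfl
  refine mem_spectrum_iff_exists_mulVec_eq_smul.mpr ⟨u ∘ ι, fun hv => hu0 (funext fun i => ?_), ?_⟩
  · have := hrestrict i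
    simp only [show ∀ j, u (ι j) = 0 from congrFun hv, mul_zero, Finset.sum_const_zero] at this
    simpa [hz0] using this.symm
  · ext i
    simp [mulVec, dotProduct, hrestrict]

end Matrix

namespace Multigraph

variable (G : Multigraph)

theorem head_inv (e : G.E) : G.head (G.inv e) = G.tail e := by
  rw [← G.tail_inv, G.inv_inv]

theorem inv_injective : Function.Injective G.inv :=
  Function.Involutive.injective G.inv_inv

theorem edgeRel_equivalence : Equivalence G.edgeRel where
  refl _ := Or.inl rfl
  symm := by
    rintro e f (rfl | rfl)
    exacts [Or.inl rfl, Or.inr (G.inv_inv e).symm]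
  trans := by
    rintro e f g (rfl | rfl) (rfl | rfl)
    exacts [Or.inl rfl, Or.inr rfl, Or.inr rfl, Or.inl (G.inv_inv e)]

theorem mk_eq_mk_iff {e f : G.E} :
    Quot.mk G.edgeRel e = Quot.mk G.edgeRel f ↔ f = e ∨ f = G.inv e := by
  rw [Quot.eq, G.edgeRel_equivalence.eqvGen_iff, edgeRel]

theorem mk_inv (e : G.E) : Quot.mk G.edgeRel (G.inv e) = Quot.mk G.edgeRel e :=
  Quot.sound (Or.inr (G.inv_inv e).symm)

theorem degree_eq_card (v : G.V) : G.degree v = #{e | G.head e = v} := by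
  rw [degree, Nat.card_eq_fintype_card, Fintype.card_subtype]

theorem card_tail_eq_degree (v : G.V) : #{e | G.tail e = v} = G.degree v := by
  rw [degree_eq_card]
  refine Finset.card_nbij' G.inv G.inv (fun e he => ?_) (fun e he => ?_)
    (fun e _ => G.inv_inv e) (fun e _ => G.inv_inv e) <;>
    simp_all [head_inv, tail_inv]

theorem sum_degree : ∑ v, G.degree v = Nat.card G.E := by
  simp only [degree_eq_card, Nat.card_eq_fintype_card]
  rw [← Finset.card_univ, Finset.card_eq_sum_card_fiberwise (fun e _ => Finset.mem_univ (G.head e))]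

/-- Each class of `edgeRel` has at most two elements: its chosen representative and the
inverse of that. -/
theorem card_E_le_two_mul_edgeCard : Nat.card G.E ≤ 2 * G.edgeCard := by
  let code (e : G.E) : Quot G.edgeRel × Bool :=
    (Quot.mk _ e, decide (e = (Quot.mk G.edgeRel e).out))
  have hcode : Function.Injective code := by
    intro e f hef
    simp only [code, Prod.mk.injEq] at hef
    obtain ⟨hq, hb⟩ := hef
    have he := G.mk_eq_mk_iff.mp (Quot.out_eq (Quot.mk G.edgeRel e))
    have hf := G.mk_eq_mk_iff.mp (Quot.out_eq (Quot.mk G.edgeRel f))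
    rw [hq] at he
    grind
  calc Nat.card G.E ≤ Nat.card (Quot G.edgeRel × Bool) := Nat.card_le_card_of_injective _ hcode
    _ = 2 * G.edgeCard := by simp [edgeCard, mul_comm]

theorem Pruned.degree_le_two {G : Multigraph} (hG : G.Pruned) (hord : G.ord ≤ 0) (v : G.V) :
    G.degree v ≤ 2 := by
  have hsum : ∑ w, G.degree w ≤ ∑ _w : G.V, 2 := by
    have := G.card_E_le_two_mul_edgeCard
    simp only [sum_degree, Finset.sum_const, Finset.card_univ, smul_eq_mul,
      ← Nat.card_eq_fintype_card]
    simp only [ord] at hord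
    omega
  have heq : ∑ w, G.degree w = ∑ _w : G.V, 2 :=
    le_antisymm hsum (Finset.sum_le_sum fun w _ => hG w)
  exact ((Finset.sum_eq_sum_iff_of_le fun w _ => hG w).mp heq.symm v (Finset.mem_univ v)).ge

theorem hashimoto_apply_eq_zero {e f : G.E} (hef : ¬(G.head e = G.tail f ∧ G.inv e ≠ f)) :
    G.hashimoto e f = 0 :=
  if_neg hef

theorem norm_le_mu1 {z : ℂ} (hz : z ∈ spectrum ℂ G.hashimoto) : ‖z‖ ≤ G.mu1 := by
  refine le_csSup ?_ ⟨z, hz, rfl⟩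
  refine ((Matrix.finite_spectrum G.hashimoto).image (‖·‖)).bddAbove.mono ?_
  rintro _ ⟨w, hw, rfl⟩
  exact ⟨w, hw, rfl⟩

theorem mu1_nonneg : 0 ≤ G.mu1 :=
  Real.sSup_nonneg (by rintro _ ⟨z, -, rfl⟩; exact norm_nonneg z)

theorem mu1_le {C : ℝ} (hC : 0 ≤ C) (h : ∀ z ∈ spectrum ℂ G.hashimoto, ‖z‖ ≤ C) :
    G.mu1 ≤ C :=
  Real.sSup_le (by rintro _ ⟨z, hz, rfl⟩; exact h z hz) hC

theorem mu1_le_mu1_of_spectrum {G H : Multigraph}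
    (h : ∀ z ∈ spectrum ℂ G.hashimoto, z ≠ 0 → z ∈ spectrum ℂ H.hashimoto) :
    G.mu1 ≤ H.mu1 := by
  refine G.mu1_le H.mu1_nonneg fun z hz => ?_
  rcases eq_or_ne z 0 with rfl | hz0
  · simpa using H.mu1_nonneg
  · exact H.norm_le_mu1 (h z hz hz0)

theorem card_hashimoto_row_le (g : G.E) :
    #{f | G.head g = G.tail f ∧ G.inv g ≠ f} ≤ G.degree (G.head g) - 1 := by
  rw [← card_tail_eq_degree, ← Finset.card_erase_of_mem (s := {f | G.tail f = G.head g})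
    (a := G.inv g) (by simp [tail_inv])]
  refine Finset.card_le_card fun f hf => ?_
  simp only [Finset.mem_filter, Finset.mem_univ, true_and, Finset.mem_erase] at hf ⊢
  exact ⟨Ne.symm hf.2, hf.1.symm⟩

/-- Each row of the Hashimoto matrix has at most one nonzero entry, so its `ℓ^∞` operator norm,
which bounds the spectrum, is at most `1`. -/
theorem mu1_le_one_of_degree_le_two (h : ∀ v, G.degree v ≤ 2) : G.mu1 ≤ 1 := by
  rcases isEmpty_or_nonempty G.E with hE | hE
  · exact G.mu1_le zero_le_one fun z hz => by simp [spectrum.of_subsingleton] at hz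
  have hrow (g : G.E) : ∑ f, ‖G.hashimoto g f‖₊ ≤ 1 := by
    have hcard : #{f | G.head g = G.tail f ∧ G.inv g ≠ f} ≤ 1 :=
      (G.card_hashimoto_row_le g).trans (by have := h (G.head g); omega)
    calc ∑ f, ‖G.hashimoto g f‖₊
        = #{f | G.head g = G.tail f ∧ G.inv g ≠ f} := by
          simp only [hashimoto, apply_ite, nnnorm_one, nnnorm_zero, Finset.sum_boole]
      _ ≤ 1 := by exact_mod_cast hcard
  have hnorm : ‖G.hashimoto‖₊ ≤ 1 := by
    rw [Matrix.linfty_opNNNorm_def]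
    exact Finset.sup_le fun g _ => hrow g
  exact G.mu1_le zero_le_one fun z hz =>
    (spectrum.norm_le_norm_of_mem hz).trans (by exact_mod_cast hnorm)

theorem Subgraph.hashimoto_graph {G : Multigraph} (S : G.Subgraph) :
    S.graph.hashimoto = G.hashimoto.submatrix Subtype.val Subtype.val := by
  ext e f
  exact if_congr (and_congr Subtype.ext_iff Subtype.ext_iff.not) rfl rfl

def Subgraph.edgeClass {G : Multigraph} (S : G.Subgraph) :
    Quot S.graph.edgeRel → Quot G.edgeRel :=
  Quot.map Subtype.val fun _ _ h => h.imp (congrArg Subtype.val) (congrArg Subtype.val)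

theorem Subgraph.edgeClass_injective {G : Multigraph} (S : G.Subgraph) :
    Function.Injective S.edgeClass := by
  rintro ⟨e⟩ ⟨f⟩ h
  exact Quot.sound ((G.mk_eq_mk_iff.mp h).imp Subtype.ext Subtype.ext)

theorem Connected.eq_of_forall_tail_eq {G : Multigraph} (hG : G.Connected) {v : G.V}
    (hv : ∀ f, G.tail f = v → G.head f = v) (w : G.V) : w = v := by
  induction hG.2 v w with
  | refl => rfl
  | tail _ hadj ih =>
    obtain ⟨f, hft, rfl⟩ := hadj
    exact hv f (hft.trans ih)

structure IsLeaf (v : G.V) (e : G.E) : Prop where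
  head_eq : G.head e = v
  tail_ne : G.tail e ≠ v
  eq_of_head_eq : ∀ f, G.head f = v → f = e

theorem isLeaf_inv_of_degree_lt_two {v : G.V} (hv : G.degree v < 2) {f : G.E}
    (hf : G.tail f = v) (hfv : G.head f ≠ v) : G.IsLeaf v (G.inv f) := by
  have hhead : G.head (G.inv f) = v := by rw [head_inv, hf]
  refine ⟨hhead, by rwa [tail_inv], fun g hg => ?_⟩
  have : Subsingleton {g // G.head g = v} :=
    Finite.card_le_one_iff_subsingleton.mp (Nat.lt_succ_iff.mp hv)
  exact congrArg Subtype.val (Subsingleton.elim (⟨g, hg⟩ : {g // G.head g = v}) ⟨_, hhead⟩)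

namespace IsLeaf

variable {G} {v : G.V} {e : G.E}

theorem eq_inv_of_tail_eq (h : G.IsLeaf v e) {f : G.E} (hf : G.tail f = v) : f = G.inv e := by
  rw [← G.inv_inv f, h.eq_of_head_eq (G.inv f) (by rwa [head_inv])]

def delete (h : G.IsLeaf v e) : G.Subgraph where
  verts := {w | w ≠ v}
  edges := {f | f ≠ e ∧ f ≠ G.inv e}
  inv_mem f hf := ⟨fun hfe => hf.2 (by rw [← hfe, G.inv_inv]),
    fun hfe => hf.1 (G.inv_injective hfe)⟩
  head_mem f hf hfv := hf.1 (h.eq_of_head_eq f hfv)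
  tail_mem f hf hfv := hf.2 (h.eq_inv_of_tail_eq hfv)

theorem delete_proper (h : G.IsLeaf v e) : h.delete.Proper :=
  Or.inl fun hV => (Set.eq_univ_iff_forall.mp hV v) rfl

theorem range_edgeClass_delete (h : G.IsLeaf v e) :
    Set.range h.delete.edgeClass = {q | q ≠ Quot.mk G.edgeRel e} := by
  ext q
  constructor
  · rintro ⟨⟨⟨f, hf⟩⟩, rfl⟩ hq
    rcases G.mk_eq_mk_iff.mp hq with hfe | hfe
    · exact hf.1 hfe.symm
    · exact hf.2 (by simp [hfe, G.inv_inv])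
  · induction q using Quot.ind with
    | mk f =>
      intro hq
      exact ⟨Quot.mk _ ⟨f, fun hfe => hq (hfe ▸ rfl), fun hfe => hq (hfe ▸ G.mk_inv e)⟩, rfl⟩

theorem ord_delete (h : G.IsLeaf v e) : h.delete.graph.ord = G.ord := by
  have hE : h.delete.graph.edgeCard + 1 = G.edgeCard := by
    rw [edgeCard, ← Nat.card_range_of_injective h.delete.edgeClass_injective,
      h.range_edgeClass_delete]
    exact Nat.card_subtype_ne_add_one _
  have hV : Nat.card h.delete.graph.V + 1 = Nat.card G.V := Nat.card_subtype_ne_add_one v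
  simp only [ord]
  omega

theorem connected_delete (h : G.IsLeaf v e) (hG : G.Connected) : h.delete.graph.Connected := by
  let u : h.delete.graph.V := ⟨G.tail e, h.tail_ne⟩
  let π (w : G.V) : h.delete.graph.V := if hw : w = v then u else ⟨w, hw⟩
  have hπ (w : G.V) (hw : w ≠ v) : π w = ⟨w, hw⟩ := dif_neg hw
  have hπu : π v = π (G.tail e) := by rw [hπ _ h.tail_ne]; exact dif_pos rfl
  have hstep (a b : G.V) (hab : G.Adj a b) :
      Relation.ReflTransGen h.delete.graph.Adj (π a) (π b) := by
    obtain ⟨f, rfl, rfl⟩ := hab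
    by_cases hfe : f = e
    · subst hfe; rw [h.head_eq, hπu]
    by_cases hfie : f = G.inv e
    · subst hfie; rw [tail_inv, head_inv, h.head_eq, hπu]
    rw [hπ _ fun hf => hfie (h.eq_inv_of_tail_eq hf), hπ _ fun hf => hfe (h.eq_of_head_eq f hf)]
    exact .single ⟨⟨f, hfe, hfie⟩, rfl, rfl⟩
  refine ⟨⟨u⟩, fun x y => ?_⟩
  have : Relation.ReflTransGen h.delete.graph.Adj (π x.1) (π y.1) :=
    Relation.ReflTransGen.lift' π hstep x.1 y.1 (hG.2 x.1 y.1)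
  rwa [hπ x.1 x.2, hπ y.1 y.2] at this

/-- Row `e` of the Hashimoto matrix vanishes (the only continuation of `e` is backtracking)
and so does column `inv e` (the only edge leading into `inv e` is `e`). -/
theorem mu1_le_mu1_delete (h : G.IsLeaf v e) : G.mu1 ≤ h.delete.graph.mu1 := by
  refine mu1_le_mu1_of_spectrum fun z hz hz0 => ?_
  rw [Subgraph.hashimoto_graph]
  refine Matrix.mem_spectrum_submatrix_of_ne_zero (m := h.delete.graph.E) Subtype.val_injective
    (fun f hf => ?_) hz hz0
  obtain rfl | rfl : f = e ∨ f = G.inv e := by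
    by_contra! hne
    exact hf ⟨⟨f, hne⟩, rfl⟩
  · refine Or.inl fun g => G.hashimoto_apply_eq_zero fun ⟨hfg, hinv⟩ => hinv ?_
    exact (h.eq_inv_of_tail_eq (hfg.symm.trans h.head_eq)).symm
  · refine Or.inr fun g => G.hashimoto_apply_eq_zero fun ⟨hgf, hinv⟩ => hinv ?_
    rw [h.eq_of_head_eq g (by rw [hgf, tail_inv, h.head_eq])]

theorem isTangle_delete (h : G.IsLeaf v e) {ν : ℝ} {r : ℤ} (hG : IsTangle ν r G) :
    IsTangle ν r h.delete.graph :=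
  ⟨h.connected_delete hG.1, hG.2.1.trans h.mu1_le_mu1_delete, h.ord_delete ▸ hG.2.2⟩

end IsLeaf

end Multigraph

/-- Let `ν > 1` be a real number and `r` an integer, and let `ψ` be a
minimal `(≥ν,<r)`-tangle.  Then `ord(ψ) ≥ 1`. -/
theorem minimal_tangle_order_pos (ν : ℝ) (hν : 1 < ν) (r : ℤ) (ψ : Multigraph)
    (hψ : IsMinimalTangle ν r ψ) : 1 ≤ ψ.ord := by
  obtain ⟨hT, hmin⟩ := hψ
  by_contra! hord
  have hdeg : ¬ ∀ w, ψ.degree w ≤ 2 := fun h =>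
    (hν.trans_le hT.2.1).not_ge (ψ.mu1_le_one_of_degree_le_two h)
  obtain ⟨v, hv⟩ : ∃ v, ψ.degree v < 2 := by
    by_contra! hpr
    exact hdeg (Multigraph.Pruned.degree_le_two hpr (by omega))
  by_cases hloop : ∀ f, ψ.tail f = v → ψ.head f = v
  · refine hdeg fun w => ?_
    rw [hT.1.eq_of_forall_tail_eq hloop w]
    omega
  push Not at hloop
  obtain ⟨f, hf, hfv⟩ := hloop
  have hleaf := ψ.isLeaf_inv_of_degree_lt_two hv hf hfv
  exact hmin _ hleaf.delete_proper (hleaf.isTangle_delete hT)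
end

section
/- Let P be a partially ordered set in which the set { s ∈ P : s ≤ t } is finite for every t ∈ P, and let N : P × P → ℚ be a function with N(t,t) ≠ 0 for every t ∈ P. Then there exists a unique function μ : P → ℚ such that for every t ∈ P, ∑_{s ≤ t} N(s,t)·μ(s) = 1. -/
/-- Let `P` be a poset in which every principal lower set
`{s : s ≤ t}` is finite, and let `N : P × P → ℚ` satisfy `N(t,t) ≠ 0` for all `t`.
Then there is a unique function `μ : P → ℚ` with `∑_{s ≤ t} N(s,t)·μ(s) = 1` for
every `t ∈ P`. -/
theorem exists_unique_mobius {P : Type*} [PartialOrder P]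
    (hfin : ∀ t : P, {s : P | s ≤ t}.Finite)
    (N : P → P → ℚ) (hN : ∀ t : P, N t t ≠ 0) :
    ∃! μ : P → ℚ, ∀ t : P, ∑ s ∈ (hfin t).toFinset, N s t * μ s = 1 := by
  classical
  have key : ∀ {s t : P}, s < t →
      ((hfin s).toFinset).card < ((hfin t).toFinset).card := by
    intro s t hst
    refine Finset.card_lt_card ?_
    constructor
    · intro x hx
      simp only [Set.Finite.mem_toFinset, Set.mem_setOf_eq] at *
      exact hx.trans hst.le
    · intro hsub
      have ht : t ∈ (hfin t).toFinset := by simp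
      have := hsub ht
      simp only [Set.Finite.mem_toFinset, Set.mem_setOf_eq] at this
      exact absurd this hst.not_ge
  have hwf : WellFounded ((· < ·) : P → P → Prop) :=
    Subrelation.wf (fun h => key h)
      (InvImage.wf (fun t => ((hfin t).toFinset).card) Nat.lt_wfRel.wf)
  set F : ∀ t : P, (∀ s, s < t → ℚ) → ℚ := fun t ih =>
    (1 - ∑ s ∈ ((hfin t).toFinset.erase t).attach,
        N s.1 t * ih s.1 (by
          have hs := s.2
          simp only [Finset.mem_erase, Set.Finite.mem_toFinset,
            Set.mem_setOf_eq] at hs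
          exact lt_of_le_of_ne hs.2 hs.1)) / N t t with hF
  set μ : P → ℚ := hwf.fix F with hμdef
  have hfix : ∀ t, μ t = F t (fun s _ => μ s) := fun t => hwf.fix_eq F t
  have ht_mem : ∀ t : P, t ∈ (hfin t).toFinset := by intro t; simp
  have split : ∀ (ν : P → ℚ) (t : P),
      ∑ s ∈ (hfin t).toFinset, N s t * ν s
        = N t t * ν t + ∑ s ∈ (hfin t).toFinset.erase t, N s t * ν s := by
    intro ν t
    exact (Finset.add_sum_erase _ (fun s => N s t * ν s) (ht_mem t)).symm
  have hμval : ∀ t : P, N t t * μ t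
      = 1 - ∑ s ∈ (hfin t).toFinset.erase t, N s t * μ s := by
    intro t
    have h1 : μ t = (1 - ∑ s ∈ (hfin t).toFinset.erase t, N s t * μ s) / N t t := by
      rw [hfix t]
      simp only [hF]
      rw [Finset.sum_attach ((hfin t).toFinset.erase t) (fun s => N s t * μ s)]
    rw [h1, mul_div_cancel₀ _ (hN t)]
  have hμsat : ∀ t : P, ∑ s ∈ (hfin t).toFinset, N s t * μ s = 1 := by
    intro t
    rw [split μ t, hμval t]
    ring
  refine ⟨μ, hμsat, ?_⟩
  intro ν hν
  funext t
  induction t using hwf.induction with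
  | _ t ih =>
    have h1 := hν t
    have h2 := hμsat t
    rw [split ν t] at h1
    rw [split μ t] at h2
    have hsum : ∑ s ∈ (hfin t).toFinset.erase t, N s t * ν s
        = ∑ s ∈ (hfin t).toFinset.erase t, N s t * μ s := by
      refine Finset.sum_congr rfl ?_
      intro s hs
      simp only [Finset.mem_erase, Set.Finite.mem_toFinset, Set.mem_setOf_eq] at hs
      rw [ih s (lt_of_le_of_ne hs.2 hs.1)]
    rw [hsum] at h1
    have : N t t * ν t = N t t * μ t := by linarith
    exact mul_left_cancel₀ (hN t) this
end

section
/- Let ψ_1, …, ψ_m be finite simple graphs, each of which is positive (pruned, with every connected component of order at least 1). Then for every integer r, there are only finitely many isomorphism classes of finite simple graphs of order less than r that can be written as a union of subgraphs each isomorphic to some ψ_i. -/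
open scoped Classical

/-- The number of injective graph homomorphisms from `G` to `H`. -/
noncomputable def numInj {α β : Type*} (G : SimpleGraph α) (H : SimpleGraph β) : ℕ :=
  Nat.card {f : G →g H // Function.Injective f}

/-- There exists an injective graph homomorphism from `G` to `H`. -/
def Injects {α β : Type*} (G : SimpleGraph α) (H : SimpleGraph β) : Prop :=
  ∃ f : G →g H, Function.Injective f

/-- The order of a finite simple graph: `#E - #V`. -/
noncomputable def gOrd {α : Type*} (G : SimpleGraph α) : ℤ :=
  (Nat.card G.edgeSet : ℤ) - (Nat.card α : ℤ)

/-- The order of a subgraph: `#E - #V`. -/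
noncomputable def subOrd {α : Type*} {G : SimpleGraph α} (H : G.Subgraph) : ℤ :=
  (Nat.card H.edgeSet : ℤ) - (Nat.card H.verts : ℤ)

/-- A simple graph is pruned if every vertex has degree at least 2. -/
def PrunedS {α : Type*} (G : SimpleGraph α) : Prop :=
  ∀ v : α, 2 ≤ Nat.card (G.neighborSet v)

/-- The order of a connected component: the number of edges with both endpoints in the
component minus the number of vertices of the component. -/
noncomputable def compOrd {α : Type*} (G : SimpleGraph α) (c : G.ConnectedComponent) : ℤ :=
  (Nat.card {e : G.edgeSet // ∀ v ∈ (e : Sym2 α), G.connectedComponentMk v = c} : ℤ)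
    - (Nat.card {v : α // G.connectedComponentMk v = c} : ℤ)

/-- A simple graph is positive if it is pruned and each connected component has
order at least 1. -/
def PositiveS {α : Type*} (G : SimpleGraph α) : Prop :=
  PrunedS G ∧ ∀ c : G.ConnectedComponent, 1 ≤ compOrd G c

/-- `S` lies in `Ψ⁺`: it can be written as a union of subgraphs, each isomorphic to
some `ψ i` (the union covering all vertices and edges of `S`). -/
def IsUnionOfCopies {m : ℕ} {β : Fin m → Type*} (ψ : ∀ i, SimpleGraph (β i))
    {γ : Type*} (S : SimpleGraph γ) : Prop :=
  ∃ F : Set S.Subgraph, F.Nonempty ∧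
    (∀ H ∈ F, ∃ i, Nonempty ((ψ i) ≃g H.coe)) ∧
    (∀ v : γ, ∃ H ∈ F, v ∈ H.verts) ∧
    (∀ e ∈ S.edgeSet, ∃ H ∈ F, e ∈ H.edgeSet)

/-- The `Ψ`-image of `G`: the union of all subgraphs of `G` isomorphic to some `ψ i`. -/
noncomputable def PsiImage {m : ℕ} {β : Fin m → Type*} (ψ : ∀ i, SimpleGraph (β i))
    {γ : Type*} (G : SimpleGraph γ) : G.Subgraph :=
  sSup {H : G.Subgraph | ∃ i, Nonempty ((ψ i) ≃g H.coe)}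

/-!
In a union of copies of positive graphs every vertex has degree at least 2, and every vertex
lies within distance `b = max_i #V(ψ i)` of a vertex of degree at least 3, because the degrees
in a component with more edges than vertices cannot all be at most 2. Since
`∑ v, (deg v - 2) = 2 * ord`, a graph of order below `r` has at most `2r` vertices of degree
at least 3 and maximum degree at most `2r`; the balls of radius `b` around the former cover the
graph, so it has at most `2r (2r + 1) ^ b` vertices.
-/

open Finset

namespace SimpleGraph

variable {V : Type*} [Fintype V] {G : SimpleGraph V}

lemma two_mul_card_le_sum_degree {W : Finset V} {E : Finset (Sym2 V)}
    (hE : E ⊆ G.edgeFinset) (hW : ∀ e ∈ E, ∀ x ∈ e, x ∈ W) :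
    2 * #E ≤ ∑ w ∈ W, G.degree w := by
  have hends : ∀ e ∈ E, #(W.bipartiteBelow (· ∈ ·) e) = 2 := fun e he => by
    have : W.bipartiteBelow (· ∈ ·) e = e.toFinset := by
      ext x
      simpa [bipartiteBelow, Sym2.mem_toFinset] using hW e he x
    rw [this, Sym2.card_toFinset_of_not_isDiag _
      (G.not_isDiag_of_mem_edgeSet (mem_edgeFinset.1 (hE he)))]
  calc 2 * #E = ∑ e ∈ E, #(W.bipartiteBelow (· ∈ ·) e) := by
        rw [sum_congr rfl hends, sum_const, smul_eq_mul, mul_comm]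
    _ = ∑ w ∈ W, #(E.bipartiteAbove (· ∈ ·) w) :=
        (sum_card_bipartiteAbove_eq_sum_card_bipartiteBelow _).symm
    _ ≤ ∑ w ∈ W, G.degree w := sum_le_sum fun w _ => by
        rw [← card_incidenceFinset_eq_degree]
        refine card_le_card fun e he => ?_
        rw [mem_bipartiteAbove] at he
        exact (mem_incidenceFinset _ _ _).2 ⟨mem_edgeFinset.1 (hE he.1), he.2⟩

lemma compOrd_eq_card_sub_card (c : G.ConnectedComponent) :
    compOrd G c = #{e ∈ G.edgeFinset | ∀ x ∈ e, G.connectedComponentMk x = c}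
      - #{v | G.connectedComponentMk v = c} := by
  rw [compOrd, Nat.card_congr (Equiv.subtypeSubtypeEquivSubtypeInter
    (· ∈ G.edgeSet) fun e => ∀ x ∈ e, G.connectedComponentMk x = c),
    Nat.card_eq_fintype_card, Nat.card_eq_fintype_card, Fintype.card_subtype,
    Fintype.card_subtype]
  congr 3
  ext e
  simp

lemma exists_three_le_degree_of_one_le_compOrd {c : G.ConnectedComponent}
    (hc : 1 ≤ compOrd G c) : ∃ w, G.connectedComponentMk w = c ∧ 3 ≤ G.degree w := by
  by_contra! hdeg
  have hsum := two_mul_card_le_sum_degree (G := G) (W := {v | G.connectedComponentMk v = c})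
    (E := {e ∈ G.edgeFinset | ∀ x ∈ e, G.connectedComponentMk x = c}) (filter_subset _ _)
    (fun e he x hx => mem_filter.2 ⟨mem_univ x, (mem_filter.1 he).2 x hx⟩)
  have hle : ∑ w ∈ ({v | G.connectedComponentMk v = c} : Finset V), G.degree w
      ≤ 2 * #{v | G.connectedComponentMk v = c} := by
    rw [mul_comm, ← smul_eq_mul, ← sum_const]
    exact sum_le_sum fun w hw => Nat.le_of_lt_succ (hdeg w (mem_filter.1 hw).2)
  rw [compOrd_eq_card_sub_card] at hc
  omega

lemma exists_walk_three_le_degree_of_one_le_compOrd (u : V)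
    (hu : 1 ≤ compOrd G (G.connectedComponentMk u)) :
    ∃ w, 3 ≤ G.degree w ∧ ∃ p : G.Walk u w, p.length < Fintype.card V := by
  obtain ⟨w, hw, hdeg⟩ := exists_three_le_degree_of_one_le_compOrd hu
  obtain ⟨p⟩ := ConnectedComponent.exact hw.symm
  exact ⟨w, hdeg, p.bypass, p.bypass_isPath.length_lt⟩

lemma sum_degree_sub_two_eq_two_mul_gOrd (G : SimpleGraph V) :
    ∑ v, ((G.degree v : ℤ) - 2) = 2 * gOrd G := by
  rw [sum_sub_distrib, ← Nat.cast_sum, sum_degrees_eq_twice_card_edges, sum_const, card_univ,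
    gOrd, Nat.card_eq_fintype_card, Nat.card_eq_fintype_card, ← edgeFinset_card]
  push_cast
  ring

lemma degree_le_two_mul_gOrd_add_two (hmin : ∀ v, 2 ≤ G.degree v) (x : V) :
    (G.degree x : ℤ) ≤ 2 * gOrd G + 2 := by
  have := single_le_sum (f := fun v => (G.degree v : ℤ) - 2)
    (fun v _ => by have := hmin v; omega) (mem_univ x)
  rw [sum_degree_sub_two_eq_two_mul_gOrd] at this
  omega

lemma card_three_le_degree_le_two_mul_gOrd (hmin : ∀ v, 2 ≤ G.degree v) :
    (#{v | 3 ≤ G.degree v} : ℤ) ≤ 2 * gOrd G := by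
  rw [← sum_degree_sub_two_eq_two_mul_gOrd]
  calc (#{v | 3 ≤ G.degree v} : ℤ) = #{v | 3 ≤ G.degree v} • (1 : ℤ) := by simp
    _ ≤ ∑ v ∈ {v | 3 ≤ G.degree v}, ((G.degree v : ℤ) - 2) :=
        card_nsmul_le_sum _ _ _ fun v hv => by have := (mem_filter.1 hv).2; omega
    _ ≤ ∑ v, ((G.degree v : ℤ) - 2) :=
        sum_le_sum_of_subset_of_nonneg (subset_univ _) fun v _ _ => by have := hmin v; omega

lemma card_walk_ball_le {D : ℕ} (hD : ∀ v, G.degree v ≤ D) (w : V) (k : ℕ) :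
    #{x | ∃ p : G.Walk x w, p.length ≤ k} ≤ (D + 1) ^ k := by
  induction k with
  | zero =>
    refine card_le_one.2 fun x hx y hy => ?_
    obtain ⟨p, hp⟩ := (mem_filter.1 hx).2
    obtain ⟨q, hq⟩ := (mem_filter.1 hy).2
    rw [Walk.eq_of_length_eq_zero (Nat.le_zero.1 hp), Walk.eq_of_length_eq_zero (Nat.le_zero.1 hq)]
  | succ k ih =>
    set B : Finset V := {x | ∃ p : G.Walk x w, p.length ≤ k}
    have hstep : ({x | ∃ p : G.Walk x w, p.length ≤ k + 1} : Finset V) ⊆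
        B ∪ B.biUnion fun y => G.neighborFinset y := by
      intro x hx
      obtain ⟨p, hp⟩ := (mem_filter.1 hx).2
      cases p with
      | nil => exact mem_union_left _ (mem_filter.2 ⟨mem_univ _, .nil, by simp⟩)
      | cons hxy q =>
        refine mem_union_right _ (mem_biUnion.2 ⟨_, mem_filter.2 ⟨mem_univ _, q, ?_⟩, ?_⟩)
        · simpa using hp
        · exact (mem_neighborFinset _ _ _).2 hxy.symm
    have hneighbors : #(B.biUnion fun y => G.neighborFinset y) ≤ #B * D :=
      card_biUnion_le_card_mul _ _ _ fun y _ => (card_neighborFinset_eq_degree G y).trans_le (hD y)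
    calc #{x | ∃ p : G.Walk x w, p.length ≤ k + 1} ≤ #B + #B * D :=
          (card_le_card hstep).trans <| (card_union_le _ _).trans <|
            Nat.add_le_add_left hneighbors _
      _ = #B * (D + 1) := by ring
      _ ≤ (D + 1) ^ (k + 1) := by rw [pow_succ]; exact Nat.mul_le_mul_right _ ih

lemma card_le_card_mul_of_forall_exists_walk {T : Finset V} {D b : ℕ}
    (hD : ∀ v, G.degree v ≤ D) (hT : ∀ v, ∃ w ∈ T, ∃ p : G.Walk v w, p.length ≤ b) :
    Fintype.card V ≤ #T * (D + 1) ^ b := by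
  have hcover : (univ : Finset V) ⊆ T.biUnion fun w => {x | ∃ p : G.Walk x w, p.length ≤ b} :=
    fun v _ => by
      obtain ⟨w, hw, p, hp⟩ := hT v
      exact mem_biUnion.2 ⟨w, hw, mem_filter.2 ⟨mem_univ v, p, hp⟩⟩
  exact (card_le_card hcover).trans <|
    card_biUnion_le_card_mul _ _ _ fun w _ => card_walk_ball_le hD w b

lemma card_le_of_two_le_degree_of_exists_walk {b R : ℕ} (hmin : ∀ v, 2 ≤ G.degree v)
    (hnear : ∀ v, ∃ w, 3 ≤ G.degree w ∧ ∃ p : G.Walk v w, p.length ≤ b)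
    (hord : gOrd G < R) :
    Fintype.card V ≤ 2 * R * (2 * R + 1) ^ b := by
  have hD : ∀ v, G.degree v ≤ 2 * R := fun v => by
    have := degree_le_two_mul_gOrd_add_two hmin v
    omega
  have hT : #{v | 3 ≤ G.degree v} ≤ 2 * R := by
    have := card_three_le_degree_le_two_mul_gOrd hmin
    omega
  calc Fintype.card V ≤ #{v | 3 ≤ G.degree v} * (2 * R + 1) ^ b :=
        card_le_card_mul_of_forall_exists_walk hD fun v => by
          obtain ⟨w, hw, hp⟩ := hnear v
          exact ⟨w, mem_filter.2 ⟨mem_univ w, hw⟩, hp⟩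
    _ ≤ 2 * R * (2 * R + 1) ^ b := Nat.mul_le_mul_right _ hT

end SimpleGraph

section UnionOfCopies

open SimpleGraph

variable {m : ℕ} {β : Fin m → Type*} {ψ : ∀ i, SimpleGraph (β i)}
  {V : Type*} {S : SimpleGraph V}

lemma IsUnionOfCopies.exists_copy (hS : IsUnionOfCopies ψ S) (v : V) :
    ∃ i, ∃ f : Copy (ψ i) S, ∃ u, f u = v := by
  obtain ⟨F, -, hiso, hverts, -⟩ := hS
  obtain ⟨H, hH, hv⟩ := hverts v
  obtain ⟨i, ⟨e⟩⟩ := hiso H hH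
  refine ⟨i, H.coeCopy.comp e.toCopy, e.symm ⟨v, hv⟩, ?_⟩
  simp [Copy.comp_apply, Subgraph.coeCopy]

variable [∀ i, Fintype (β i)] [Fintype V]

lemma IsUnionOfCopies.two_le_degree (hψ : ∀ i, PrunedS (ψ i)) (hS : IsUnionOfCopies ψ S)
    (v : V) : 2 ≤ S.degree v := by
  obtain ⟨i, f, u, rfl⟩ := hS.exists_copy v
  calc 2 ≤ (ψ i).degree u := by
        rw [← card_neighborSet_eq_degree, ← Nat.card_eq_fintype_card]
        exact hψ i u
    _ ≤ S.degree (f u) := f.degree_le u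

lemma IsUnionOfCopies.exists_walk_three_le_degree
    (hψ : ∀ i, ∀ c, 1 ≤ compOrd (ψ i) c) (hS : IsUnionOfCopies ψ S) (v : V) :
    ∃ w, 3 ≤ S.degree w ∧
      ∃ p : S.Walk v w, p.length ≤ Finset.univ.sup fun i => Fintype.card (β i) := by
  obtain ⟨i, f, u, rfl⟩ := hS.exists_copy v
  obtain ⟨w, hw, p, hp⟩ := exists_walk_three_le_degree_of_one_le_compOrd u (hψ i _)
  refine ⟨f w, hw.trans (f.degree_le w), p.map f.toHom, ?_⟩
  rw [Walk.length_map]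
  exact hp.le.trans (Finset.le_sup (f := fun i => Fintype.card (β i)) (Finset.mem_univ i))

end UnionOfCopies

lemma exists_list_iso_of_card_le (N : ℕ) :
    ∃ L : List (Σ n : ℕ, SimpleGraph (Fin n)), ∀ (V : Type*) [Fintype V] (G : SimpleGraph V),
      Fintype.card V ≤ N → ∃ p ∈ L, Nonempty (G ≃g p.2) := by
  refine ⟨(List.range (N + 1)).flatMap fun n =>
    (Finset.univ : Finset (SimpleGraph (Fin n))).toList.map (Sigma.mk n), fun V _ G hV => ?_⟩
  refine ⟨⟨_, G.overFin rfl⟩, ?_, ⟨G.overFinIso rfl⟩⟩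
  simp only [List.mem_flatMap, List.mem_range, List.mem_map, Finset.mem_toList, Finset.mem_univ,
    true_and]
  exact ⟨_, Nat.lt_succ_of_le hV, _, rfl⟩

/-- Let `ψ 0, …, ψ (m-1)` be finite simple graphs, each positive
(pruned with every connected component of order at least 1).  Then for every integer
`r` there are only finitely many isomorphism classes of finite simple graphs of order
less than `r` that can be written as a union of subgraphs each isomorphic to some
`ψ i`. -/
theorem finitely_many_isoClasses_of_unions {m : ℕ} {β : Fin m → Type*}
    [∀ i, Fintype (β i)] (ψ : ∀ i, SimpleGraph (β i))
    (hpos : ∀ i, PositiveS (ψ i)) (r : ℤ) :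
    ∃ L : List (Σ n : ℕ, SimpleGraph (Fin n)),
      ∀ (γ : Type*) [Fintype γ], ∀ S : SimpleGraph γ,
        IsUnionOfCopies ψ S → gOrd S < r → ∃ p ∈ L, Nonempty (S ≃g p.2) := by
  obtain ⟨L, hL⟩ := exists_list_iso_of_card_le
    (2 * r.toNat * (2 * r.toNat + 1) ^ Finset.univ.sup fun i => Fintype.card (β i))
  refine ⟨L, fun γ _ S hS hord => hL γ S ?_⟩
  exact SimpleGraph.card_le_of_two_le_degree_of_exists_walk
    (hS.two_le_degree fun i => (hpos i).1) (hS.exists_walk_three_le_degree fun i => (hpos i).2)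
    (hord.trans_le (Int.self_le_toNat r))
end

section
/- Let ψ_1, …, ψ_m be finite simple graphs, let s be the largest number of edges among them, and suppose that for every r' there are only finitely many isomorphism classes in Ψ^+ of order less than r'. Then: (1) for every graph ψ in Ψ^+ and every finite simple graph G, every injective homomorphism ψ → G has image contained in the Ψ-image Ψ^+ ∩ G; and (2) if r is an integer, G is a finite simple graph with ord(Ψ^+ ∩ G) ≥ r, and ψ ∈ Ψ^+ has ord(ψ) < r, then every injective homomorphism ψ → G factors as an injective homomorphism ψ → ψ' followed by the inclusion of a subgraph ψ' of G, where ψ' lies in Ψ^+ and r ≤ ord(ψ') ≤ r + s − 1. -/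
open scoped Classical

/-!
Part (1): an injective homomorphism carries each copy of some `ψ i` covering `S` to a copy of
`ψ i` in `G`, so its image is a union of such copies and lies in the `Ψ`-image.

Part (2): start from the image `U` of `S`, whose order `ord S` is below `r`, and adjoin the
finitely many copies of the `ψ i` in `G` one at a time. Their union with `U` is the `Ψ`-image,
of order at least `r`, and each step raises the order by at most `s`, since it adds at most `s`
edges and no fewer vertices. The first union reaching order `r` therefore has order at most
`r + s - 1`, and being a union of copies it lies in `Ψ⁺`.
-/

open SimpleGraph

theorem exists_subset_sup_mem_Icc {α : Type*} [SemilatticeSup α] [OrderBot α] (φ : α → ℤ)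
    (s : ℤ) (x : α) (T : Finset α) (hstep : ∀ y, ∀ a ∈ T, φ (y ⊔ a) ≤ φ y + s) {r : ℤ}
    (hx : φ x < r) (hT : r ≤ φ (x ⊔ T.sup id)) :
    ∃ T' ⊆ T, r ≤ φ (x ⊔ T'.sup id) ∧ φ (x ⊔ T'.sup id) ≤ r + s - 1 := by
  induction T using Finset.induction_on with
  | empty => simp only [Finset.sup_empty, sup_bot_eq] at hT; omega
  | insert a T _ ih =>
    by_cases hr : r ≤ φ (x ⊔ T.sup id)
    · obtain ⟨T', hT', h⟩ := ih (fun y b hb => hstep y b (Finset.mem_insert_of_mem hb)) hr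
      exact ⟨T', hT'.trans (Finset.subset_insert _ _), h⟩
    · refine ⟨insert a T, subset_rfl, hT, ?_⟩
      have := hstep (x ⊔ T.sup id) a (Finset.mem_insert_self _ _)
      rw [Finset.sup_insert, id, sup_comm a, ← sup_assoc]
      omega

namespace SimpleGraph.Subgraph

variable {V W : Type*} {G : SimpleGraph V}

lemma map_sSup {G' : SimpleGraph W} (f : G →g G') (F : Set G.Subgraph) :
    (sSup F).map f = sSup (Subgraph.map f '' F) := by
  refine Subgraph.ext ?_ ?_
  · simp only [map_verts, verts_sSup, Set.image_iUnion₂, Set.biUnion_image]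
  · ext v w
    simp only [map_adj, Relation.Map, sSup_adj, Set.mem_image]
    constructor
    · rintro ⟨u, v', ⟨H, hH, huv⟩, rfl, rfl⟩
      exact ⟨H.map f, ⟨H, hH, rfl⟩, u, v', huv, rfl, rfl⟩
    · rintro ⟨-, ⟨H, hH, rfl⟩, u, v', huv, rfl, rfl⟩
      exact ⟨u, v', ⟨H, hH, huv⟩, rfl, rfl⟩

lemma sSup_eq_top_of_covers {F : Set G.Subgraph} (hv : ∀ v, ∃ H ∈ F, v ∈ H.verts)
    (he : ∀ e ∈ G.edgeSet, ∃ H ∈ F, e ∈ H.edgeSet) : sSup F = ⊤ := by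
  refine le_antisymm le_top ⟨fun v _ => ?_, fun u v huv => ?_⟩
  · obtain ⟨H, hH, hvH⟩ := hv v
    exact Set.mem_biUnion hH hvH
  · obtain ⟨H, hH, hE⟩ := he s(u, v) huv
    exact sSup_adj.mpr ⟨H, hH, hE⟩

lemma card_edgeSet_coe (H : G.Subgraph) : Nat.card H.coe.edgeSet = Nat.card H.edgeSet := by
  rw [Nat.card_coe_set_eq, Nat.card_coe_set_eq, ← image_coe_edgeSet_coe,
    Set.ncard_image_of_injective _ (Sym2.map.injective Subtype.val_injective)]

end SimpleGraph.Subgraph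

section Order

variable {V α β : Type*} {G : SimpleGraph V}

lemma gOrd_eq_of_iso {A : SimpleGraph α} {B : SimpleGraph β} (e : A ≃g B) :
    gOrd A = gOrd B := by
  rw [gOrd, gOrd, Nat.card_congr e.toEquiv, Nat.card_congr e.mapEdgeSet]

lemma gOrd_coe (H : G.Subgraph) : gOrd H.coe = subOrd H := by
  rw [gOrd, subOrd, Subgraph.card_edgeSet_coe]

lemma subOrd_toSubgraph {A : SimpleGraph α} (f : Copy A G) : subOrd f.toSubgraph = gOrd A := by
  rw [← gOrd_coe, gOrd_eq_of_iso f.isoToSubgraph]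

lemma subOrd_sup_le [Finite V] (U H : G.Subgraph) :
    subOrd (U ⊔ H) ≤ subOrd U + Nat.card H.edgeSet := by
  have he : Nat.card (U ⊔ H).edgeSet ≤ Nat.card U.edgeSet + Nat.card H.edgeSet := by
    simp only [Nat.card_coe_set_eq, Subgraph.edgeSet_sup]
    exact Set.ncard_union_le _ _
  have hv : Nat.card U.verts ≤ Nat.card (U ⊔ H).verts := by
    simp only [Nat.card_coe_set_eq]
    exact Set.ncard_le_ncard Set.subset_union_left (Set.toFinite _)
  rw [subOrd, subOrd]
  omega

end Order

section Copies

variable {m : ℕ} {β : Fin m → Type*} (ψ : ∀ i, SimpleGraph (β i))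
  {V α : Type*} {G : SimpleGraph V} {A : SimpleGraph α}

def psiCopies (G : SimpleGraph V) : Set G.Subgraph :=
  {H | ∃ i, Nonempty ((ψ i) ≃g H.coe)}

lemma psiImage_eq_sSup : PsiImage ψ G = sSup (psiCopies ψ G) := rfl

variable {ψ}

lemma card_edgeSet_le_of_mem_psiCopies {s : ℕ} (hs : ∀ i, Nat.card (ψ i).edgeSet ≤ s)
    {H : G.Subgraph} (hH : H ∈ psiCopies ψ G) : Nat.card H.edgeSet ≤ s := by
  obtain ⟨i, ⟨e⟩⟩ := hH
  rw [← Subgraph.card_edgeSet_coe, ← Nat.card_congr e.mapEdgeSet]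
  exact hs i

lemma SimpleGraph.Copy.map_mem_psiCopies (f : Copy A G) {H : A.Subgraph}
    (hH : H ∈ psiCopies ψ A) : H.map f.toHom ∈ psiCopies ψ G :=
  let ⟨i, ⟨e⟩⟩ := hH
  ⟨i, ⟨e.trans (f.isoSubgraphMap H)⟩⟩

lemma IsUnionOfCopies.exists_toSubgraph_eq_sSup (hA : IsUnionOfCopies ψ A) (f : Copy A G) :
    ∃ F ⊆ psiCopies ψ G, F.Nonempty ∧ f.toSubgraph = sSup F := by
  obtain ⟨F, hFne, hFc, hFv, hFe⟩ := hA
  refine ⟨Subgraph.map f.toHom '' F, ?_, hFne.image _, ?_⟩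
  · rintro _ ⟨H, hH, rfl⟩
    exact f.map_mem_psiCopies (hFc H hH)
  · rw [Copy.toSubgraph, ← Subgraph.sSup_eq_top_of_covers hFv hFe, Subgraph.map_sSup]

lemma IsUnionOfCopies.toSubgraph_le_psiImage (hA : IsUnionOfCopies ψ A) (f : Copy A G) :
    f.toSubgraph ≤ PsiImage ψ G := by
  obtain ⟨F, hF, -, hfF⟩ := hA.exists_toSubgraph_eq_sSup f
  exact hfF ▸ sSup_le_sSup hF

lemma isUnionOfCopies_sSup {F : Set G.Subgraph} (hne : F.Nonempty) (hF : F ⊆ psiCopies ψ G) :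
    IsUnionOfCopies ψ (sSup F).coe := by
  refine ⟨Subgraph.restrict '' F, hne.image _, ?_, ?_, ?_⟩
  · rintro _ ⟨H, hH, rfl⟩
    have hH' : ((sSup F).restrict H).map (sSup F).hom = H :=
      (Subgraph.coeSubgraph_restrict_eq H).trans (inf_eq_right.mpr (le_sSup hH))
    obtain ⟨i, ⟨e⟩⟩ := hF hH
    exact ⟨i, ⟨e.trans (hH' ▸ (sSup F).coeCopy.isoSubgraphMap ((sSup F).restrict H)).symm⟩⟩
  · rintro ⟨v, hv⟩
    obtain ⟨H, hH, hvH⟩ := Set.mem_iUnion₂.mp ((Subgraph.verts_sSup F) ▸ hv)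
    exact ⟨(sSup F).restrict H, ⟨H, hH, rfl⟩, hvH⟩
  · intro e he
    induction e using Sym2.ind with
    | _ a b =>
      obtain ⟨H, hH, hab⟩ := Subgraph.sSup_adj.mp (show (sSup F).Adj a b from he)
      exact ⟨(sSup F).restrict H, ⟨H, hH, rfl⟩, he, hab⟩

end Copies

lemma factors_of_map_top_le {V W : Type*} {S : SimpleGraph V} {G : SimpleGraph W} (f : S →g G)
    {H : G.Subgraph} (hH : (⊤ : S.Subgraph).map f ≤ H) :
    (∀ v, f v ∈ H.verts) ∧ ∀ u v, S.Adj u v → H.Adj (f u) (f v) :=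
  ⟨fun v => hH.1 ⟨v, trivial, rfl⟩, fun u v huv => hH.2 ⟨u, v, huv, rfl, rfl⟩⟩

theorem injective_homs_factor_general {m : ℕ} {β : Fin m → Type*}
    (ψ : ∀ i, SimpleGraph (β i)) (s : ℕ)
    (hs : ∀ i, Nat.card (ψ i).edgeSet ≤ s) :
    (∀ (δ γ : Type*) [Fintype δ] [Fintype γ],
      ∀ (S : SimpleGraph δ) (G : SimpleGraph γ), IsUnionOfCopies ψ S →
        ∀ f : S →g G, Function.Injective f →
          (∀ v : δ, f v ∈ (PsiImage ψ G).verts) ∧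
          (∀ u v : δ, S.Adj u v → (PsiImage ψ G).Adj (f u) (f v))) ∧
    (∀ (r : ℤ) (δ γ : Type*) [Fintype δ] [Fintype γ],
      ∀ (S : SimpleGraph δ) (G : SimpleGraph γ),
        r ≤ subOrd (PsiImage ψ G) → IsUnionOfCopies ψ S → gOrd S < r →
        ∀ f : S →g G, Function.Injective f →
          ∃ ψ' : G.Subgraph, IsUnionOfCopies ψ ψ'.coe ∧
            r ≤ subOrd ψ' ∧ subOrd ψ' ≤ r + (s : ℤ) - 1 ∧
            (∀ v : δ, f v ∈ ψ'.verts) ∧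
            (∀ u v : δ, S.Adj u v → ψ'.Adj (f u) (f v))) := by
  refine ⟨fun δ γ _ _ S G hS f hf => factors_of_map_top_le f
    (hS.toSubgraph_le_psiImage (f.toCopy hf)), ?_⟩
  intro r δ γ _ _ S G hr hS hSr f hf
  set c := f.toCopy hf
  obtain ⟨F, hFc, hFne, hcF⟩ := hS.exists_toSubgraph_eq_sSup c
  set T := (Set.toFinite (psiCopies ψ G)).toFinset
  have hT : c.toSubgraph ⊔ T.sup id = PsiImage ψ G := by
    rw [Finset.sup_id_eq_sSup, Set.Finite.coe_toFinset, ← psiImage_eq_sSup]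
    exact sup_eq_right.mpr (hS.toSubgraph_le_psiImage c)
  have hstep : ∀ U, ∀ H ∈ T, subOrd (U ⊔ H) ≤ subOrd U + s := fun U H hH =>
    (subOrd_sup_le U H).trans (by
      gcongr
      exact_mod_cast card_edgeSet_le_of_mem_psiCopies hs ((Set.Finite.mem_toFinset _).mp hH))
  obtain ⟨T', hT'T, hrT', hT's⟩ := exists_subset_sup_mem_Icc subOrd s c.toSubgraph T hstep
    (by rwa [subOrd_toSubgraph]) (by rwa [hT])
  refine ⟨c.toSubgraph ⊔ T'.sup id, ?_, hrT', hT's, factors_of_map_top_le f le_sup_left⟩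
  rw [hcF, Finset.sup_id_eq_sSup, ← sSup_union]
  refine isUnionOfCopies_sSup (hFne.mono Set.subset_union_left) (Set.union_subset hFc ?_)
  exact fun H hH => (Set.Finite.mem_toFinset _).mp (hT'T hH)

/-- Let `ψ 0, …, ψ (m-1)` be finite simple graphs, `s` the largest
number of edges among them, and suppose that for every `r'` there are only finitely
many isomorphism classes in `Ψ⁺` of order less than `r'`.  Then:
(1) every injective homomorphism from a member of `Ψ⁺` to a finite simple graph `G`
has image contained in the `Ψ`-image `Ψ⁺ ∩ G`; and
(2) if `ord(Ψ⁺ ∩ G) ≥ r` and `ψ₀ ∈ Ψ⁺` has `ord(ψ₀) < r`, then every injective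
homomorphism `ψ₀ → G` factors through a subgraph `ψ' ⊆ G` lying in `Ψ⁺` with
`r ≤ ord(ψ') ≤ r + s - 1`. -/
theorem injective_homs_factor {m : ℕ} {β : Fin m → Type*}
    [∀ i, Fintype (β i)] (ψ : ∀ i, SimpleGraph (β i)) (s : ℕ)
    (hs : ∀ i, Nat.card (ψ i).edgeSet ≤ s)
    (hfin : ∀ r' : ℤ, ∃ L : List (Σ n : ℕ, SimpleGraph (Fin n)),
      ∀ (γ : Type*) [Fintype γ], ∀ S : SimpleGraph γ,
        IsUnionOfCopies ψ S → gOrd S < r' → ∃ p ∈ L, Nonempty (S ≃g p.2)) :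
    (∀ (δ γ : Type*) [Fintype δ] [Fintype γ],
      ∀ (S : SimpleGraph δ) (G : SimpleGraph γ), IsUnionOfCopies ψ S →
        ∀ f : S →g G, Function.Injective f →
          (∀ v : δ, f v ∈ (PsiImage ψ G).verts) ∧
          (∀ u v : δ, S.Adj u v → (PsiImage ψ G).Adj (f u) (f v))) ∧
    (∀ (r : ℤ) (δ γ : Type*) [Fintype δ] [Fintype γ],
      ∀ (S : SimpleGraph δ) (G : SimpleGraph γ),
        r ≤ subOrd (PsiImage ψ G) → IsUnionOfCopies ψ S → gOrd S < r →
        ∀ f : S →g G, Function.Injective f →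
          ∃ ψ' : G.Subgraph, IsUnionOfCopies ψ ψ'.coe ∧
            r ≤ subOrd ψ' ∧ subOrd ψ' ≤ r + (s : ℤ) - 1 ∧
            (∀ v : δ, f v ∈ ψ'.verts) ∧
            (∀ u v : δ, S.Adj u v → ψ'.Adj (f u) (f v))) :=
  injective_homs_factor_general ψ s hs
end
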